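/- Assume k ≤ LR and k − 1 ≤ LR. Then MC(π^(k)) ≤ MC(π) for every selected node distribution s with s_0 ∈ {0, 1} and every cluster order π ∈ Π(s). That is, in a CSN-DSS with one separate node the system capacity equals MC(π^(k)) = Σ_{i=1}^k min(α, w_i(π^(k))), achieved by placing the separate selected node last. -/

import Mathlib

/-- Relative location `h_π(i) = #{1 ≤ j ≤ i : π j = π i}`. -/
def relLoc (π : ℕ → ℕ) (i : ℕ) : ℕ :=
  ((Finset.Icc 1 i).filter (fun j => π j = π i)).card

/-- Intra-cluster coefficient `a_i(π) = d_I + 1 − h_π(i)` (truncated subtraction). -/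
def aCoef (dI : ℕ) (π : ℕ → ℕ) (i : ℕ) : ℕ :=
  dI + 1 - relLoc π i

/-- Cross-cluster coefficient `b_i(π) = max(0, d_C − (i − h_π(i)))` (truncated subtraction). -/
def bCoef (dC : ℕ) (π : ℕ → ℕ) (i : ℕ) : ℕ :=
  dC - (i - relLoc π i)

/-- Part incoming weight `w_i(π)`: for a separate position (`π i = 0`) it is
`(d_I + d_C + 1 − i)·β_C`, otherwise `a_i(π)·β_I + b_i(π)·β_C`. -/
noncomputable def weight (dI dC : ℕ) (βI βC : ℝ) (π : ℕ → ℕ) (i : ℕ) : ℝ :=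
  if π i = 0 then ((dI + dC + 1 - i : ℕ) : ℝ) * βC
  else (aCoef dI π i : ℝ) * βI + (bCoef dC π i : ℝ) * βC

/-- Min-cut `MC(π) = Σ_{i=1}^k min(α, w_i(π))`. -/
noncomputable def MC (k dI dC : ℕ) (βI βC α : ℝ) (π : ℕ → ℕ) : ℝ :=
  ∑ i ∈ Finset.Icc 1 k, min α (weight dI dC βI βC π i)

/-- A cluster order: a `k`-tuple with entries in `{0, 1, …, L}`. -/
def IsClusterOrder (L k : ℕ) (π : ℕ → ℕ) : Prop :=
  ∀ i, 1 ≤ i → i ≤ k → π i ≤ L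

/-- A selected node distribution `(s_0, s_1, …, s_L)`:
`R ≥ s_1 ≥ s_2 ≥ … ≥ s_L` and `s_0 + s_1 + … + s_L = k`. -/
def IsDist (L R k : ℕ) (s : ℕ → ℕ) : Prop :=
  (∀ i, 1 ≤ i → i + 1 ≤ L → s (i + 1) ≤ s i) ∧
  (∀ i, 1 ≤ i → i ≤ L → s i ≤ R) ∧
  ∑ i ∈ Finset.range (L + 1), s i = k

/-- `π ∈ Π(s)`: `π` is a cluster order with `#{1 ≤ j ≤ k : π j = c} = s c` for all `0 ≤ c ≤ L`. -/
def MemPi (L k : ℕ) (s : ℕ → ℕ) (π : ℕ → ℕ) : Prop :=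
  IsClusterOrder L k π ∧
  ∀ c, c ≤ L → ((Finset.Icc 1 k).filter (fun j => π j = c)).card = s c

/-- Vertical order of distribution `s` (possibly with separate entries, whose positions are
not constrained here):  over the cluster positions (`π i ≠ 0`) in increasing order, relative
locations are nondecreasing, with ties broken by increasing cluster index. -/
def IsVerticalOrder (L k : ℕ) (s : ℕ → ℕ) (π : ℕ → ℕ) : Prop :=
  MemPi L k s π ∧
  ∀ i j, 1 ≤ i → i < j → j ≤ k → π i ≠ 0 → π j ≠ 0 →
    relLoc π i ≤ relLoc π j ∧ (relLoc π i = relLoc π j → π i < π j)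

/-- The distribution `s*` (no separate node): `s*_0 = 0`, `s*_i = R` for `1 ≤ i ≤ ⌊k/R⌋`,
`s*_{⌊k/R⌋+1} = k − ⌊k/R⌋·R`, and `0` beyond. -/
def sStar0 (R k : ℕ) : ℕ → ℕ := fun i =>
  if i = 0 then 0
  else if i ≤ k / R then R
  else if i = k / R + 1 then k - k / R * R
  else 0

/-- The distribution with one separate node: `s_0 = 1`, `s_i = R` for `1 ≤ i ≤ ⌊(k−1)/R⌋`,
`s_{⌊(k−1)/R⌋+1} = (k−1) − ⌊(k−1)/R⌋·R`, and `0` beyond. -/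
def sStar1 (R k : ℕ) : ℕ → ℕ := fun i =>
  if i = 0 then 1
  else if i ≤ (k - 1) / R then R
  else if i = (k - 1) / R + 1 then (k - 1) - (k - 1) / R * R
  else 0

/-- `π^(j)`: the cluster order with exactly one separate entry, located at position `j`,
whose cluster entries form the vertical order of the distribution `sStar1 R k`. -/
def IsPiJ (L R k j : ℕ) (π : ℕ → ℕ) : Prop :=
  π j = 0 ∧ IsVerticalOrder L k (sStar1 R k) π

/-!
Let `U` be the set of positions where `w_i(π) ≤ α`. Then `MC(π) = Σ_{i ∈ U} w_i(π) + (k − |U|)·α`,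
while `MC(π^(k))` is at most the same expression with `π^(k)` and the last `|U|` positions, so it
suffices to compare the weights. Write `w_i = (β_I − β_C)·ā_i + (d + 1 − i)·β_C` (an equality for
`π^(k)`, a lower bound in general). The second term is smallest on the last positions. For the
first, picture position `i` in row `h(i)` of its cluster: `ā_i` counts the rows above `i`, and `π`
has at most `Σ_c (s_c + 1 − t)` positions in rows `t` and above. This capacity is largest for the
greedy distribution, whose vertical order puts exactly those positions last.
-/
open Finset

section Generic

variable {ι M : Type*}

theorem Finset.sum_min_eq_sum_filter_add [AddCommMonoid M] [LinearOrder M] (s : Finset ι)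
    (f : ι → M) (a : M) :
    ∑ i ∈ s, min a (f i) = ∑ i ∈ s with f i ≤ a, f i + (#s - #{i ∈ s | f i ≤ a}) • a := by
  classical
  rw [← sum_filter_add_sum_filter_not s (fun i => f i ≤ a),
    ← card_filter_add_card_filter_not (s := s) (fun i => f i ≤ a), Nat.add_sub_cancel_left]
  congr 1
  · exact sum_congr rfl fun i hi => min_eq_right (mem_filter.mp hi).2
  · rw [← sum_const]
    exact sum_congr rfl fun i hi => min_eq_left (le_of_not_ge (mem_filter.mp hi).2)

theorem Finset.sum_min_le_sum_add [AddCommMonoid M] [LinearOrder M] [IsOrderedAddMonoid M]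
    [DecidableEq ι] {s T : Finset ι} (hT : T ⊆ s) (f : ι → M) (a : M) :
    ∑ i ∈ s, min a (f i) ≤ ∑ i ∈ T, f i + (#s - #T) • a := by
  rw [← sum_sdiff hT, ← card_sdiff_of_subset hT, add_comm]
  gcongr with i
  · exact min_le_right _ _
  · exact sum_le_card_nsmul _ _ _ fun i _ => min_le_left _ _

theorem Finset.sum_Icc_le_sum_of_antitone [AddCommMonoid M] [PartialOrder M]
    [IsOrderedCancelAddMonoid M] {f : ℕ → M} (hf : Antitone f) {U : Finset ℕ} {k : ℕ}
    (hU : U ⊆ Icc 1 k) : ∑ i ∈ Icc (k + 1 - #U) k, f i ≤ ∑ i ∈ U, f i := by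
  have hUk : #U ≤ k := by simpa using card_le_card hU
  have hcard : #(Icc (k + 1 - #U) k) = #U := by rw [Nat.card_Icc]; omega
  rw [← sum_sdiff_le_sum_sdiff]
  calc ∑ i ∈ Icc (k + 1 - #U) k \ U, f i
      ≤ #(Icc (k + 1 - #U) k \ U) • f (k + 1 - #U) :=
        sum_le_card_nsmul _ _ _ fun i hi => hf (mem_Icc.mp (mem_sdiff.mp hi).1).1
    _ = #(U \ Icc (k + 1 - #U) k) • f (k + 1 - #U) := by rw [card_sdiff_comm hcard]
    _ ≤ ∑ i ∈ U \ Icc (k + 1 - #U) k, f i := by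
        refine card_nsmul_le_sum _ _ _ fun i hi => hf ?_
        obtain ⟨hiU, hiI⟩ := mem_sdiff.mp hi
        have := mem_Icc.mp (hU hiU)
        rw [mem_Icc] at hiI
        omega

theorem Finset.filter_Icc_eq_Icc_of_monotoneOn {α : Type*} [Preorder α] [DecidableLE α] {f : ℕ → α}
    {a n : ℕ} (hf : MonotoneOn f (Icc a n)) (t : α) :
    {i ∈ Icc a n | t ≤ f i} = Icc (n + 1 - #{i ∈ Icc a n | t ≤ f i}) n := by
  set A := {i ∈ Icc a n | t ≤ f i}
  rcases A.eq_empty_or_nonempty with hA | hA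
  · rw [hA, card_empty, Nat.sub_zero, Icc_eq_empty_of_lt n.lt_succ_self]
  obtain ⟨b, hbn, hAeq⟩ : ∃ b ≤ n, A = Icc b n := by
    have hb := mem_filter.mp (A.min'_mem hA)
    refine ⟨A.min' hA, (mem_Icc.mp hb.1).2, ?_⟩
    ext i
    simp only [A, mem_filter, mem_Icc] at hb ⊢
    refine ⟨fun hi => ⟨A.min'_le i (mem_filter.mpr ⟨mem_Icc.mpr hi.1, hi.2⟩), hi.1.2⟩,
      fun hi => ?_⟩
    have hi' : a ≤ i ∧ i ≤ n := ⟨hb.1.1.trans hi.1, hi.2⟩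
    exact ⟨hi', hb.2.trans (hf (mem_Icc.mpr hb.1) (mem_Icc.mpr hi') hi.1)⟩
  rw [hAeq, Nat.card_Icc, Nat.sub_sub_self (by omega)]

end Generic

section RelLoc

variable {π : ℕ → ℕ}

theorem one_le_relLoc {i : ℕ} (hi : 1 ≤ i) : 1 ≤ relLoc π i :=
  card_pos.mpr ⟨i, by simp [hi]⟩

theorem relLoc_le_self (π : ℕ → ℕ) (i : ℕ) : relLoc π i ≤ i :=
  (card_filter_le _ _).trans (by simp)

theorem relLoc_lt_relLoc {i j : ℕ} (hi : 1 ≤ i) (hij : i < j) (h : π i = π j) :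
    relLoc π i < relLoc π j := by
  unfold relLoc
  rw [h]
  refine card_lt_card ⟨filter_subset_filter _ (Icc_subset_Icc_right hij.le), fun hsub => ?_⟩
  have := mem_Icc.mp (mem_filter.mp (hsub (by simp [hi.trans hij.le] : j ∈ _))).1
  omega

theorem relLoc_le_card_filter {i k : ℕ} (hik : i ≤ k) :
    relLoc π i ≤ #{j ∈ Icc 1 k | π j = π i} :=
  card_le_card (filter_subset_filter _ (Icc_subset_Icc_right hik))

theorem injOn_relLoc (c : ℕ) : Set.InjOn (relLoc π) {i | 1 ≤ i ∧ π i = c} := by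
  intro i ⟨hi, hic⟩ j ⟨hj, hjc⟩ hij
  by_contra hne
  rcases Nat.lt_or_gt_of_ne hne with h | h
  · exact (relLoc_lt_relLoc hi h (hic.trans hjc.symm)).ne hij
  · exact (relLoc_lt_relLoc hj h (hjc.trans hic.symm)).ne hij.symm

theorem image_relLoc_filter (π : ℕ → ℕ) (k c : ℕ) :
    {i ∈ Icc 1 k | π i = c}.image (relLoc π) = Icc 1 #{i ∈ Icc 1 k | π i = c} := by
  have hinj : Set.InjOn (relLoc π) ({i ∈ Icc 1 k | π i = c} : Finset ℕ) :=
    (injOn_relLoc c).mono fun i hi => by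
      simp only [coe_filter, mem_Icc] at hi; exact ⟨hi.1.1, hi.2⟩
  refine eq_of_subset_of_card_le (fun v hv => ?_) ?_
  · obtain ⟨i, hi, rfl⟩ := mem_image.mp hv
    simp only [mem_filter, mem_Icc] at hi
    refine mem_Icc.mpr ⟨one_le_relLoc hi.1.1, ?_⟩
    simpa [hi.2] using relLoc_le_card_filter (π := π) hi.1.2
  · rw [card_image_of_injOn hinj, Nat.card_Icc, Nat.add_sub_cancel]

theorem card_filter_le_relLoc (π : ℕ → ℕ) (k c : ℕ) {t : ℕ} (ht : 1 ≤ t) :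
    #{i ∈ Icc 1 k | π i = c ∧ t ≤ relLoc π i} = #{i ∈ Icc 1 k | π i = c} + 1 - t := by
  have hinj : Set.InjOn (relLoc π) ({i ∈ Icc 1 k | π i = c ∧ t ≤ relLoc π i} : Finset ℕ) :=
    (injOn_relLoc c).mono fun i hi => by
      simp only [coe_filter, mem_Icc] at hi; exact ⟨hi.1.1, hi.2.1⟩
  rw [← card_image_of_injOn hinj, ← filter_filter, ← filter_image, image_relLoc_filter,
    ← Nat.card_Icc t]
  congr 1
  ext v
  simp only [mem_filter, mem_Icc]
  omega

end RelLoc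

/-- `ā_i`: `a_i(π)`, or `0` at a separate position. Every weight splits as
`w_i = (β_I − β_C)·ā_i + (d + 1 − i)·β_C` up to the truncation in `b_i`. -/
def aBar (dI : ℕ) (π : ℕ → ℕ) (i : ℕ) : ℕ :=
  if π i = 0 then 0 else aCoef dI π i

section Weight

variable {dI dC : ℕ} {βI βC : ℝ} {π : ℕ → ℕ} {i : ℕ}

theorem weight_ge (hβC : 0 ≤ βC) :
    (βI - βC) * aBar dI π i + ((dI + dC + 1 - i : ℕ) : ℝ) * βC ≤ weight dI dC βI βC π i := by
  unfold weight aBar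
  split_ifs with hi
  · simp
  · have hab : dI + dC + 1 - i ≤ aCoef dI π i + bCoef dC π i := by
      have := relLoc_le_self π i
      unfold aCoef bCoef
      omega
    have : ((dI + dC + 1 - i : ℕ) : ℝ) * βC ≤ (aCoef dI π i + bCoef dC π i : ℕ) * βC := by
      gcongr
    push_cast at this
    linarith

theorem weight_eq (h : π i ≠ 0 → relLoc π i ≤ dI + 1 ∧ i ≤ relLoc π i + dC) :
    weight dI dC βI βC π i = (βI - βC) * aBar dI π i + ((dI + dC + 1 - i : ℕ) : ℝ) * βC := by
  unfold weight aBar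
  split_ifs with hi
  · simp
  · have hab : aCoef dI π i + bCoef dC π i = dI + dC + 1 - i := by
      have := relLoc_le_self π i
      have := h hi
      unfold aCoef bCoef
      omega
    rw [← hab]
    push_cast
    ring

end Weight

def rowCount (π : ℕ → ℕ) (S : Finset ℕ) (t : ℕ) : ℕ :=
  #{i ∈ S | π i ≠ 0 ∧ t ≤ relLoc π i}

/-- Cluster `c` has `s c + 1 - t` positions in rows `t, …, s c`. -/
def rowCapacity (L : ℕ) (s : ℕ → ℕ) (t : ℕ) : ℕ :=
  ∑ c ∈ Icc 1 L, (s c + 1 - t)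

theorem rowCount_mono {π : ℕ → ℕ} {S T : Finset ℕ} (hST : S ⊆ T) (t : ℕ) :
    rowCount π S t ≤ rowCount π T t :=
  card_le_card (filter_subset_filter _ hST)

theorem rowCount_le_card (π : ℕ → ℕ) (S : Finset ℕ) (t : ℕ) :
    rowCount π S t ≤ #{i ∈ S | π i ≠ 0} :=
  card_le_card fun _ hi => by
    simp only [mem_filter] at hi ⊢
    exact ⟨hi.1, hi.2.1⟩

theorem sum_aBar_add_sum_rowCount {dI : ℕ} {π : ℕ → ℕ} {S : Finset ℕ}
    (hS : ∀ i ∈ S, π i ≠ 0 → relLoc π i ≤ dI + 1) :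
    ∑ i ∈ S, aBar dI π i + ∑ t ∈ Icc 1 (dI + 1), rowCount π S t
      = #{i ∈ S | π i ≠ 0} * (dI + 1) := by
  calc ∑ i ∈ S, aBar dI π i + ∑ t ∈ Icc 1 (dI + 1), rowCount π S t
      = ∑ i ∈ S, (aBar dI π i + #{t ∈ Icc 1 (dI + 1) | π i ≠ 0 ∧ t ≤ relLoc π i}) := by
        simp only [rowCount, card_filter, sum_add_distrib]
        rw [sum_comm]
    _ = ∑ i ∈ S, if π i ≠ 0 then dI + 1 else 0 := by
        refine sum_congr rfl fun i hi => ?_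
        by_cases hi0 : π i = 0
        · simp [aBar, hi0]
        · have hle := hS i hi hi0
          have hrows : {t ∈ Icc 1 (dI + 1) | π i ≠ 0 ∧ t ≤ relLoc π i} = Icc 1 (relLoc π i) := by
            ext t
            simp only [mem_filter, mem_Icc]
            omega
          rw [hrows, Nat.card_Icc, if_pos hi0, aBar, if_neg hi0, aCoef]
          omega
    _ = #{i ∈ S | π i ≠ 0} * (dI + 1) := by rw [← sum_filter, sum_const, smul_eq_mul]

theorem MemPi.rowCount_Icc {L k : ℕ} {s π : ℕ → ℕ} (hπ : MemPi L k s π) {t : ℕ} (ht : 1 ≤ t) :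
    rowCount π (Icc 1 k) t = rowCapacity L s t := by
  have hmaps : Set.MapsTo π ({i ∈ Icc 1 k | π i ≠ 0 ∧ t ≤ relLoc π i} : Finset ℕ) (Icc 1 L) := by
    intro i hi
    simp only [coe_filter, mem_Icc, Set.mem_ofPred_eq] at hi
    exact mem_Icc.mpr ⟨Nat.one_le_iff_ne_zero.mpr hi.2.1, hπ.1 i hi.1.1 hi.1.2⟩
  rw [rowCount, card_eq_sum_card_fiberwise hmaps, rowCapacity]
  refine sum_congr rfl fun c hc => ?_
  have hc := mem_Icc.mp hc
  rw [← hπ.2 c hc.2, ← card_filter_le_relLoc π k c ht, filter_filter]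
  congr 1
  refine filter_congr fun i _ => ?_
  constructor
  · rintro ⟨⟨-, h⟩, rfl⟩; exact ⟨rfl, h⟩
  · rintro ⟨rfl, h⟩; exact ⟨⟨by omega, h⟩, rfl⟩

theorem IsDist.sum_Icc {L R k : ℕ} {s : ℕ → ℕ} (hs : IsDist L R k s) :
    s 0 + ∑ c ∈ Icc 1 L, s c = k := by
  rw [← hs.2.2, range_eq_Ico, sum_eq_sum_Ico_succ_bot L.succ_pos]
  rfl

section SStar1

variable {R k : ℕ}

theorem sStar1_of_le {c : ℕ} (hc : 1 ≤ c) (hcq : c ≤ (k - 1) / R) : sStar1 R k c = R := by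
  rw [sStar1, if_neg (Nat.one_le_iff_ne_zero.mp hc), if_pos hcq]

theorem sStar1_div_add_one : sStar1 R k ((k - 1) / R + 1) = (k - 1) % R := by
  rw [sStar1, if_neg (Nat.succ_ne_zero _), if_neg (Nat.not_succ_le_self _), if_pos rfl]
  have := Nat.div_add_mod' (k - 1) R
  omega

theorem sStar1_le (hR : 1 ≤ R) (c : ℕ) : sStar1 R k c ≤ R := by
  have := Nat.mod_lt (k - 1) hR
  have := Nat.div_add_mod' (k - 1) R
  unfold sStar1
  split_ifs <;> omega

theorem sStar1_one (hR : 1 ≤ R) : sStar1 R k 1 = min R (k - 1) := by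
  by_cases hq : 1 ≤ (k - 1) / R
  · have := (Nat.le_div_iff_mul_le hR).mp hq
    rw [sStar1_of_le le_rfl hq]
    omega
  · have hq0 : (k - 1) / R = 0 := Nat.lt_one_iff.mp (not_le.mp hq)
    have hkR : k - 1 < R := (Nat.div_eq_zero_iff.mp hq0).resolve_left (by omega)
    have := sStar1_div_add_one (R := R) (k := k)
    rw [hq0, Nat.mod_eq_of_lt hkR] at this
    rw [this]
    omega

end SStar1

theorem rowCapacity_sStar1_ge {L R k t : ℕ} (hk : k - 1 ≤ L * R) (ht : 1 ≤ t) :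
    (k - 1) / R * (R + 1 - t) + ((k - 1) % R + 1 - t) ≤ rowCapacity L (sStar1 R k) t := by
  have hfull : ∑ c ∈ Icc 1 ((k - 1) / R), (sStar1 R k c + 1 - t) = (k - 1) / R * (R + 1 - t) := by
    rw [sum_congr rfl fun c hc => by rw [sStar1_of_le (mem_Icc.mp hc).1 (mem_Icc.mp hc).2],
      sum_const, Nat.card_Icc, smul_eq_mul, Nat.add_sub_cancel]
  have hqL : (k - 1) / R ≤ L := Nat.div_le_of_le_mul (by rwa [Nat.mul_comm])
  rcases hqL.lt_or_eq with hqL | hqL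
  · calc (k - 1) / R * (R + 1 - t) + ((k - 1) % R + 1 - t)
        = ∑ c ∈ Icc 1 ((k - 1) / R + 1), (sStar1 R k c + 1 - t) := by
          rw [sum_Icc_succ_top (Nat.le_add_left 1 _), hfull, sStar1_div_add_one]
      _ ≤ rowCapacity L (sStar1 R k) t := sum_le_sum_of_subset (Icc_subset_Icc_right hqL)
  · have hr : (k - 1) % R = 0 := by
      have := Nat.div_add_mod' (k - 1) R
      rw [← hqL] at hk
      generalize (k - 1) / R = q at *
      omega
    rw [rowCapacity, ← hqL, hfull, hr]
    omega

/-- Apart from the final `+ 1`, the right-hand side is the lower bound of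
`rowCapacity_sStar1_ge` for the greedy distribution. -/
theorem IsDist.rowCapacity_add_le {L R k : ℕ} {s : ℕ → ℕ} (hs : IsDist L R k s)
    (hs0 : s 0 ≤ 1) {t : ℕ} (ht : 1 ≤ t) (htR : t ≤ R) :
    rowCapacity L s t + s 0 ≤ (k - 1) / R * (R + 1 - t) + ((k - 1) % R + 1 - t) + 1 := by
  set P := {c ∈ Icc 1 L | t ≤ s c}
  have hcap : rowCapacity L s t = ∑ c ∈ P, (s c + 1 - t) :=
    (sum_filter_of_ne fun c _ hc => by omega).symm
  have hdiv := Nat.div_add_mod' (k - 1) R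
  generalize (k - 1) / R = q at *
  generalize (k - 1) % R = r at *
  by_cases hP : #P ≤ q
  · have : ∑ c ∈ P, (s c + 1 - t) ≤ #P * (R + 1 - t) := by
      refine (sum_le_card_nsmul _ _ _ fun c hc => ?_).trans_eq (smul_eq_mul _ _)
      have := hs.2.1 c (mem_Icc.mp (mem_filter.mp hc).1).1 (mem_Icc.mp (mem_filter.mp hc).1).2
      omega
    have := Nat.mul_le_mul_right (R + 1 - t) hP
    omega
  · have hsum : ∑ c ∈ P, (s c + 1 - t) + #P * (t - 1) ≤ k - s 0 := by
      have hterm : ∀ c ∈ P, s c + 1 - t + (t - 1) = s c := fun c hc => by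
        have := (mem_filter.mp hc).2
        omega
      rw [← smul_eq_mul, ← sum_const, ← sum_add_distrib, sum_congr rfl hterm]
      have := hs.sum_Icc
      have : P.sum s ≤ ∑ c ∈ Icc 1 L, s c := sum_le_sum_of_subset (filter_subset _ _)
      omega
    have h₁ : (q + 1) * (t - 1) ≤ #P * (t - 1) := Nat.mul_le_mul_right _ (by omega)
    have h₂ : (q + 1) * (t - 1) = q * (t - 1) + (t - 1) := Nat.succ_mul q (t - 1)
    have h₃ : q * R = q * (R + 1 - t) + q * (t - 1) := by
      rw [← Nat.mul_add]; congr 1; omega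
    omega

namespace IsPiJ

variable {L R k : ℕ} {πk : ℕ → ℕ}

theorem eq_zero_iff (hπk : IsPiJ L R k k πk) {i : ℕ} (hi : i ∈ Icc 1 k) :
    πk i = 0 ↔ i = k := by
  obtain ⟨a, ha⟩ := card_eq_one.mp ((hπk.2.1.2 0 (Nat.zero_le L)).trans (by simp [sStar1]))
  have hmem : ∀ j, j ∈ Icc 1 k → (πk j = 0 ↔ j = a) := fun j hj => by
    simpa [hj] using Finset.ext_iff.mp ha j
  rw [hmem i hi, ← (hmem k (mem_Icc.mpr ⟨(mem_Icc.mp hi).1.trans (mem_Icc.mp hi).2, le_rfl⟩)).mp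
    hπk.1]

theorem filter_ne_zero_Icc (hπk : IsPiJ L R k k πk) {a : ℕ} (ha : 1 ≤ a) :
    {i ∈ Icc a k | πk i ≠ 0} = Icc a (k - 1) := by
  ext i
  simp only [mem_filter, mem_Icc]
  constructor
  · rintro ⟨⟨hai, hik⟩, hi0⟩
    have := (hπk.eq_zero_iff (mem_Icc.mpr ⟨by omega, hik⟩)).not.mp hi0
    omega
  · rintro ⟨hai, hik⟩
    exact ⟨⟨hai, by omega⟩, (hπk.eq_zero_iff (mem_Icc.mpr ⟨by omega, by omega⟩)).not.mpr (by omega)⟩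

theorem rowCount_Icc (hπk : IsPiJ L R k k πk) {a : ℕ} (ha : 1 ≤ a) (t : ℕ) :
    rowCount πk (Icc a k) t = #{i ∈ Icc a (k - 1) | t ≤ relLoc πk i} := by
  rw [rowCount, ← filter_filter, hπk.filter_ne_zero_Icc ha]

theorem relLoc_le (hπk : IsPiJ L R k k πk) (hR : 1 ≤ R) {i : ℕ} (hi : i ∈ Icc 1 k) :
    relLoc πk i ≤ R := by
  have hi := mem_Icc.mp hi
  calc relLoc πk i ≤ #{j ∈ Icc 1 k | πk j = πk i} := relLoc_le_card_filter hi.2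
    _ = sStar1 R k (πk i) := hπk.2.1.2 _ (hπk.2.1.1 i hi.1 hi.2)
    _ ≤ R := sStar1_le hR _

theorem ne_zero (hπk : IsPiJ L R k k πk) {i : ℕ} (hi : i ∈ Icc 1 (k - 1)) : πk i ≠ 0 := by
  rw [← hπk.filter_ne_zero_Icc le_rfl] at hi
  exact (mem_filter.mp hi).2

theorem monotoneOn_relLoc (hπk : IsPiJ L R k k πk) : MonotoneOn (relLoc πk) (Icc 1 (k - 1)) := by
  intro i hi j hj hij
  rcases hij.lt_or_eq with hij | rfl
  · have hi' := mem_Icc.mp hi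
    have hj' := mem_Icc.mp hj
    exact (hπk.2.2 i j hi'.1 hij (by omega) (hπk.ne_zero hi) (hπk.ne_zero hj)).1
  · exact le_rfl

theorem filter_le_relLoc (hπk : IsPiJ L R k k πk) (hk : 1 ≤ k) {t : ℕ} (ht : 1 ≤ t) :
    {i ∈ Icc 1 (k - 1) | t ≤ relLoc πk i} = Icc (k - rowCapacity L (sStar1 R k) t) (k - 1) := by
  have hcard : #{i ∈ Icc 1 (k - 1) | t ≤ relLoc πk i} = rowCapacity L (sStar1 R k) t := by
    rw [← hπk.rowCount_Icc le_rfl, hπk.2.1.rowCount_Icc ht]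
  rw [filter_Icc_eq_Icc_of_monotoneOn hπk.monotoneOn_relLoc t, hcard, Nat.sub_add_cancel hk]

theorem rowCount_Icc_sub (hπk : IsPiJ L R k k πk) {m : ℕ} (hm : m ≤ k) {t : ℕ} (ht : 1 ≤ t) :
    rowCount πk (Icc (k + 1 - m) k) t = min (m - 1) (rowCapacity L (sStar1 R k) t) := by
  rcases Nat.eq_zero_or_pos m with rfl | hm0
  · simp [rowCount]
  set N := rowCapacity L (sStar1 R k) t
  have hA := hπk.filter_le_relLoc (by omega) ht
  have hN : N ≤ k - 1 := by
    have := card_filter_le (Icc 1 (k - 1)) (t ≤ relLoc πk ·)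
    rw [hA, Nat.card_Icc, Nat.card_Icc] at this
    omega
  have hrow : {i ∈ Icc (k + 1 - m) (k - 1) | t ≤ relLoc πk i}
      = Icc (max (k + 1 - m) (k - N)) (k - 1) := by
    ext i
    have := Finset.ext_iff.mp hA i
    simp only [mem_filter, mem_Icc] at this ⊢
    constructor
    · rintro ⟨⟨h₁, h₂⟩, h₃⟩
      have := (this.mp ⟨⟨by omega, h₂⟩, h₃⟩).1
      omega
    · rintro ⟨h₁, h₂⟩
      exact ⟨⟨by omega, h₂⟩, (this.mpr ⟨by omega, h₂⟩).2⟩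
  rw [hπk.rowCount_Icc (by omega), hrow, Nat.card_Icc]
  omega

/-- In a vertical order, position `i` sees at most `d_C` nodes of other clusters before it, so
`b_i` is not truncated. -/
theorem le_relLoc_add (hπk : IsPiJ L R k k πk) (hL : 1 ≤ L) (hR : 1 ≤ R) {dC : ℕ}
    (hkd : k ≤ R - 1 + dC) {i : ℕ} (hi : i ∈ Icc 1 (k - 1)) : i ≤ relLoc πk i + dC := by
  have hA := hπk.filter_le_relLoc (by have := mem_Icc.mp hi; omega)
    (Nat.le_add_left 1 (relLoc πk i))
  have hiA : i ∉ Icc (k - rowCapacity L (sStar1 R k) (relLoc πk i + 1)) (k - 1) := by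
    simp [← hA]
  have hN : sStar1 R k 1 + 1 - (relLoc πk i + 1) ≤ rowCapacity L (sStar1 R k) (relLoc πk i + 1) :=
    single_le_sum (f := fun c => sStar1 R k c + 1 - (relLoc πk i + 1))
      (fun _ _ => Nat.zero_le _) (mem_Icc.mpr ⟨le_rfl, hL⟩)
  rw [sStar1_one hR] at hN
  rw [mem_Icc] at hi hiA
  omega

end IsPiJ

theorem MemPi.relLoc_le {L R k : ℕ} {s π : ℕ → ℕ} (hπ : MemPi L k s π) (hs : IsDist L R k s)
    {i : ℕ} (hi : i ∈ Icc 1 k) (hi0 : π i ≠ 0) : relLoc π i ≤ R := by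
  have hi := mem_Icc.mp hi
  calc relLoc π i ≤ #{j ∈ Icc 1 k | π j = π i} := relLoc_le_card_filter hi.2
    _ = s (π i) := hπ.2 _ (hπ.1 i hi.1 hi.2)
    _ ≤ R := hs.2.1 _ (Nat.one_le_iff_ne_zero.mpr hi0) (hπ.1 i hi.1 hi.2)

theorem MemPi.card_filter_eq_zero_le {L k : ℕ} {s π : ℕ → ℕ} (hπ : MemPi L k s π)
    {U : Finset ℕ} (hU : U ⊆ Icc 1 k) : #U ≤ #{i ∈ U | π i ≠ 0} + s 0 := by
  rw [← card_filter_add_card_filter_not (s := U) (π · ≠ 0), ← hπ.2 0 (Nat.zero_le L)]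
  gcongr
  intro i hi
  simp only [mem_filter, not_not] at hi ⊢
  exact ⟨hU hi.1, hi.2⟩

theorem rowCount_add_card_sep_le {L R k : ℕ} {πk s π : ℕ → ℕ} (hπk : IsPiJ L R k k πk)
    (hs : IsDist L R k s) (hs0 : s 0 ≤ 1) (hπ : MemPi L k s π) (hkLR : k - 1 ≤ L * R)
    {U : Finset ℕ} (hU : U ⊆ Icc 1 k) {t : ℕ} (ht : 1 ≤ t) (htR : t ≤ R) :
    rowCount π U t + (#U - #{i ∈ U | π i ≠ 0})
      ≤ rowCount πk (Icc (k + 1 - #U) k) t + 1 := by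
  have h₁ := rowCount_le_card π U t
  have h₂ := (rowCount_mono hU t).trans_eq (hπ.rowCount_Icc ht)
  have h₃ := hs.rowCapacity_add_le hs0 ht htR
  have h₄ := rowCapacity_sStar1_ge (L := L) hkLR ht
  have h₅ := hπ.card_filter_eq_zero_le hU
  have h₆ := card_filter_le U (π · ≠ 0)
  rw [hπk.rowCount_Icc_sub (by simpa using card_le_card hU) ht]
  omega

theorem sum_aBar_Icc_le {L R k : ℕ} {πk s π : ℕ → ℕ} (hπk : IsPiJ L R k k πk)
    (hs : IsDist L R k s) (hs0 : s 0 ≤ 1) (hπ : MemPi L k s π) (hR : 1 ≤ R)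
    (hkLR : k - 1 ≤ L * R) {U : Finset ℕ} (hU : U ⊆ Icc 1 k) :
    ∑ i ∈ Icc (k + 1 - #U) k, aBar (R - 1) πk i ≤ ∑ i ∈ U, aBar (R - 1) π i := by
  obtain ⟨m, hm⟩ : ∃ m, #U = m := ⟨_, rfl⟩
  obtain ⟨u, hu⟩ : ∃ u, #{i ∈ U | π i ≠ 0} = u := ⟨_, rfl⟩
  have hmk : m ≤ k := by simpa [hm] using card_le_card hU
  have hum : u ≤ m := hu ▸ hm ▸ card_filter_le _ _
  rw [hm]
  rcases Nat.eq_zero_or_pos m with rfl | hm0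
  · rw [Nat.sub_zero, Icc_eq_empty_of_lt k.lt_succ_self, sum_empty]
    exact Nat.zero_le _
  have hRdI : R - 1 + 1 = R := Nat.sub_add_cancel hR
  have hUcake := sum_aBar_add_sum_rowCount (dI := R - 1) (π := π) (S := U)
    fun i hi hi0 => hRdI.symm ▸ hπ.relLoc_le hs (hU hi) hi0
  have hScake := sum_aBar_add_sum_rowCount (dI := R - 1) (π := πk) (S := Icc (k + 1 - m) k)
    fun i hi _ => hRdI.symm ▸ hπk.relLoc_le hR (Icc_subset_Icc (by omega) le_rfl hi)
  rw [hRdI, hu] at hUcake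
  rw [hRdI, hπk.filter_ne_zero_Icc (by omega), Nat.card_Icc] at hScake
  have hrow : ∀ t ∈ Icc 1 R,
      rowCount π U t + (m - u) ≤ rowCount πk (Icc (k + 1 - m) k) t + 1 := fun t ht => by
    simpa [hm, hu] using
      rowCount_add_card_sep_le hπk hs hs0 hπ hkLR hU (mem_Icc.mp ht).1 (mem_Icc.mp ht).2
  have hrows : ∑ t ∈ Icc 1 R, rowCount π U t + (m - u) * R
      ≤ ∑ t ∈ Icc 1 R, rowCount πk (Icc (k + 1 - m) k) t + R := by
    have := sum_le_sum hrow
    simp only [sum_add_distrib, sum_const, Nat.card_Icc, Nat.add_sub_cancel, smul_eq_mul,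
      mul_one] at this
    linarith [Nat.mul_comm R (m - u)]
  have e₁ : (k - 1 + 1 - (k + 1 - m)) * R + R = m * R := by
    rw [← Nat.succ_mul]; congr 1; omega
  have e₂ : (m - u) * R + u * R = m * R := by rw [← Nat.add_mul, Nat.sub_add_cancel hum]
  omega

theorem sum_weight_Icc_le {L R k dC : ℕ} {βI βC : ℝ} {πk s π : ℕ → ℕ}
    (hπk : IsPiJ L R k k πk) (hs : IsDist L R k s) (hs0 : s 0 ≤ 1) (hπ : MemPi L k s π)
    (hL : 1 ≤ L) (hR : 1 ≤ R) (hkd : k ≤ R - 1 + dC) (hkLR : k - 1 ≤ L * R)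
    (hβ : βC ≤ βI) (hβC : 0 ≤ βC) {U : Finset ℕ} (hU : U ⊆ Icc 1 k) :
    ∑ i ∈ Icc (k + 1 - #U) k, weight (R - 1) dC βI βC πk i
      ≤ ∑ i ∈ U, weight (R - 1) dC βI βC π i := by
  set f : ℕ → ℝ := fun i => ((R - 1 + dC + 1 - i : ℕ) : ℝ) * βC
  have hf : Antitone f := fun i j hij => by
    simp only [f]
    gcongr
  have hUk : #U ≤ k := by simpa using card_le_card hU
  have hsplit : ∀ i ∈ Icc (k + 1 - #U) k,
      weight (R - 1) dC βI βC πk i = (βI - βC) * aBar (R - 1) πk i + f i := by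
    intro i hi
    refine weight_eq fun hi0 => ?_
    have hik : i ∈ Icc 1 k := Icc_subset_Icc (by omega) le_rfl hi
    have hi' : i ∈ Icc 1 (k - 1) := by
      rw [← hπk.filter_ne_zero_Icc le_rfl]
      exact mem_filter.mpr ⟨hik, hi0⟩
    exact ⟨(Nat.sub_add_cancel hR).symm ▸ hπk.relLoc_le hR hik, hπk.le_relLoc_add hL hR hkd hi'⟩
  have haBar : ∑ i ∈ Icc (k + 1 - #U) k, (aBar (R - 1) πk i : ℝ)
      ≤ ∑ i ∈ U, (aBar (R - 1) π i : ℝ) := by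
    exact_mod_cast sum_aBar_Icc_le hπk hs hs0 hπ hR hkLR hU
  calc ∑ i ∈ Icc (k + 1 - #U) k, weight (R - 1) dC βI βC πk i
      = (βI - βC) * ∑ i ∈ Icc (k + 1 - #U) k, (aBar (R - 1) πk i : ℝ)
          + ∑ i ∈ Icc (k + 1 - #U) k, f i := by
        rw [sum_congr rfl hsplit, sum_add_distrib, mul_sum]
    _ ≤ (βI - βC) * ∑ i ∈ U, (aBar (R - 1) π i : ℝ) + ∑ i ∈ U, f i := by
        gcongr ?_ + ?_
        · exact mul_le_mul_of_nonneg_left haBar (sub_nonneg.mpr hβ)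
        · exact sum_Icc_le_sum_of_antitone hf hU
    _ = ∑ i ∈ U, ((βI - βC) * aBar (R - 1) π i + f i) := by rw [sum_add_distrib, mul_sum]
    _ ≤ ∑ i ∈ U, weight (R - 1) dC βI βC π i := sum_le_sum fun i _ => weight_ge hβC

theorem stmt7_general (L R k dI dC : ℕ) (βI βC α : ℝ)
    (hL : 1 ≤ L) (hR : 2 ≤ R)
    (hdI : dI = R - 1) (hkd : k ≤ dI + dC)
    (hβ : βC ≤ βI) (hβC : 0 < βC)
    (hk1LR : k - 1 ≤ L * R)
    (πk : ℕ → ℕ) (hπk : IsPiJ L R k k πk)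
    (s : ℕ → ℕ) (hs : IsDist L R k s) (hs0 : s 0 = 0 ∨ s 0 = 1)
    (π : ℕ → ℕ) (hπ : MemPi L k s π) :
    MC k dI dC βI βC α πk ≤ MC k dI dC βI βC α π := by
  subst hdI
  set U := {i ∈ Icc 1 k | weight (R - 1) dC βI βC π i ≤ α}
  have hU : U ⊆ Icc 1 k := filter_subset _ _
  have hUk : #U ≤ k := by simpa using card_le_card hU
  have hS : #(Icc (k + 1 - #U) k) = #U := by rw [Nat.card_Icc]; omega
  calc MC k (R - 1) dC βI βC α πk
      ≤ ∑ i ∈ Icc (k + 1 - #U) k, weight (R - 1) dC βI βC πk i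
          + (#(Icc 1 k) - #(Icc (k + 1 - #U) k)) • α :=
        sum_min_le_sum_add (Icc_subset_Icc (by omega) le_rfl) _ _
    _ ≤ ∑ i ∈ U, weight (R - 1) dC βI βC π i + (#(Icc 1 k) - #U) • α := by
        rw [hS]
        gcongr
        exact sum_weight_Icc_le hπk hs (by omega) hπ hL (by omega) hkd hk1LR hβ hβC.le hU
    _ = MC k (R - 1) dC βI βC α π := (sum_min_eq_sum_filter_add _ _ _).symm

/-- in a CSN-DSS with one separate node the system capacity equals
`MC(π^(k))`, i.e. `MC(π^(k)) ≤ MC(π)` for every distribution `s` with `s_0 ∈ {0, 1}` and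
every cluster order `π ∈ Π(s)`. -/
theorem stmt7 (L R k dI dC : ℕ) (βI βC α : ℝ)
    (hL : 1 ≤ L) (hR : 2 ≤ R) (hk : 2 ≤ k)
    (hdI : dI = R - 1) (hdC : 1 ≤ dC) (hkd : k ≤ dI + dC)
    (hβ : βC ≤ βI) (hβC : 0 < βC) (hα : 0 < α)
    (hkLR : k ≤ L * R) (hk1LR : k - 1 ≤ L * R)
    (πk : ℕ → ℕ) (hπk : IsPiJ L R k k πk)
    (s : ℕ → ℕ) (hs : IsDist L R k s) (hs0 : s 0 = 0 ∨ s 0 = 1)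
    (π : ℕ → ℕ) (hπ : MemPi L k s π) :
    MC k dI dC βI βC α πk ≤ MC k dI dC βI βC α π :=
  stmt7_general L R k dI dC βI βC α hL hR hdI hkd hβ hβC hk1LR πk hπk s hs hs0 π hπ
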